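/- arXiv:1901.07921 — 2 statements merged into one kernel-verified Lean document; each statement's English description precedes it below -/
import Mathlib

section
/- Let u: R → U be a ring epimorphism. The class of u-contramodules (R-modules M with Hom_R(U, M) = 0 = Ext^1_R(U, M)) is closed under kernels of morphisms, extensions, and arbitrary products in the category of R-modules. -/
/-!
Fix a projective resolution `P₂ → P₁ → P₀ → U`. Then `Ext¹(U, M) = 0` says that every
cocycle `P₁ → M` (one killing `P₂`) is a coboundary, i.e. factors through `d₁ : P₁ → P₀`.
With this description each closure property is a diagram chase: for products work
componentwise; for `ker f` with `f : M → N`, a coboundary `g : P₀ → M` of the cocycle has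
`f ∘ g` vanishing on the image of `d₁`, so `f ∘ g` factors through `U` and vanishes because
`Hom(U, N) = 0`; for an extension `0 → A → B → C → 0`, lift a coboundary for the image in `C`
along `B → C` (as `P₀` is projective) and correct the difference, a cocycle with values in
`A`, by a coboundary there. The `Hom`-parts are left exactness of `Hom(U, -)`.
-/

universe u

noncomputable section

/-- The first Ext group of two `R`-modules (as a `ℤ`-module). -/
abbrev ext1 (R : Type u) [Ring R] (X Y : ModuleCat.{u} R) : Type u :=
  ((Ext ℤ (ModuleCat.{u} R) 1).obj (Opposite.op X)).obj Y

/-- `M` is a `u`-contramodule if `Hom_R(U, M) = 0 = Ext¹_R(U, M)`. -/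
def IsUContramodule (R : Type u) [Ring R] (U : Type u) [AddCommGroup U] [Module R U]
    (M : Type u) [AddCommGroup M] [Module R M] : Prop :=
  Subsingleton (U →ₗ[R] M) ∧
    Subsingleton (ext1 R (ModuleCat.of R U) (ModuleCat.of R M))

open CategoryTheory Limits

section Linear

variable {R : Type*} [Ring R] {U A B C P₀ P₁ P₂ : Type*}
  [AddCommGroup U] [AddCommGroup A] [AddCommGroup B] [AddCommGroup C]
  [AddCommGroup P₀] [AddCommGroup P₁] [AddCommGroup P₂]
  [Module R U] [Module R A] [Module R B] [Module R C]
  [Module R P₀] [Module R P₁] [Module R P₂]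

lemma Function.Exact.exists_comp_eq_of_comp_eq_zero {i : A →ₗ[R] B} {p : B →ₗ[R] C}
    (hexact : Function.Exact i p) (hi : Function.Injective i) (h : U →ₗ[R] B)
    (hh : p ∘ₗ h = 0) : ∃ h' : U →ₗ[R] A, i ∘ₗ h' = h := by
  have hmem (x : U) : h x ∈ LinearMap.range i :=
    (hexact (h x)).1 (LinearMap.congr_fun hh x)
  refine ⟨(LinearEquiv.ofInjective i hi).symm ∘ₗ h.codRestrict _ hmem, ?_⟩
  ext x
  exact congrArg Subtype.val ((LinearEquiv.ofInjective i hi).apply_symm_apply ⟨h x, hmem x⟩)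

lemma subsingleton_linearMap_of_injective {i : A →ₗ[R] B} (hi : Function.Injective i)
    [Subsingleton (U →ₗ[R] B)] : Subsingleton (U →ₗ[R] A) :=
  ⟨fun _ _ => (LinearMap.cancel_left hi).1 (Subsingleton.elim _ _)⟩

lemma subsingleton_linearMap_of_exact {i : A →ₗ[R] B} {p : B →ₗ[R] C}
    (hexact : Function.Exact i p) (hi : Function.Injective i)
    [Subsingleton (U →ₗ[R] A)] [Subsingleton (U →ₗ[R] C)] : Subsingleton (U →ₗ[R] B) := by
  refine ⟨fun f g => ?_⟩
  suffices ∀ h : U →ₗ[R] B, h = 0 by rw [this f, this g]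
  intro h
  obtain ⟨h', rfl⟩ := hexact.exists_comp_eq_of_comp_eq_zero hi h (Subsingleton.elim _ _)
  rw [Subsingleton.elim h' 0, LinearMap.comp_zero]

lemma subsingleton_linearMap_pi {ι : Type*} {M : ι → Type*} [∀ i, AddCommGroup (M i)]
    [∀ i, Module R (M i)] [∀ i, Subsingleton (U →ₗ[R] M i)] :
    Subsingleton (U →ₗ[R] ((i : ι) → M i)) :=
  ⟨fun f g => LinearMap.ext fun x => funext fun i =>
    LinearMap.congr_fun (Subsingleton.elim (LinearMap.proj i ∘ₗ f) (LinearMap.proj i ∘ₗ g)) x⟩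

variable (d₂ : P₂ →ₗ[R] P₁) (d₁ : P₁ →ₗ[R] P₀)

/-- `Hom(P₀, M) → Hom(P₁, M) → Hom(P₂, M)` is exact in the middle; for a projective resolution
`P₂ → P₁ → P₀ → X` this is the vanishing of `Ext¹(X, M)`. -/
def HomExactAtOne (M : Type*) [AddCommGroup M] [Module R M] : Prop :=
  ∀ f : P₁ →ₗ[R] M, f ∘ₗ d₂ = 0 → ∃ g : P₀ →ₗ[R] M, g ∘ₗ d₁ = f

namespace HomExactAtOne

variable {d₂ d₁}

lemma ker {M N : Type*} [AddCommGroup M] [AddCommGroup N] [Module R M] [Module R N]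
    {f : M →ₗ[R] N} (hM : HomExactAtOne d₂ d₁ M)
    (hN : ∀ g : P₀ →ₗ[R] N, g ∘ₗ d₁ = 0 → g = 0) : HomExactAtOne d₂ d₁ (LinearMap.ker f) := by
  intro φ hφ
  obtain ⟨g, hg⟩ := hM ((LinearMap.ker f).subtype ∘ₗ φ) <| by
    rw [LinearMap.comp_assoc, hφ, LinearMap.comp_zero]
  have hfg : f ∘ₗ g = 0 := hN _ <| by
    rw [LinearMap.comp_assoc, hg]
    ext x
    exact (φ x).2
  refine ⟨g.codRestrict _ fun x => LinearMap.congr_fun hfg x, ?_⟩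
  ext x
  exact LinearMap.congr_fun hg x

lemma of_exact [Module.Projective R P₀] (hd : d₁ ∘ₗ d₂ = 0) {i : A →ₗ[R] B} {p : B →ₗ[R] C}
    (hexact : Function.Exact i p) (hi : Function.Injective i) (hp : Function.Surjective p)
    (hA : HomExactAtOne d₂ d₁ A) (hC : HomExactAtOne d₂ d₁ C) : HomExactAtOne d₂ d₁ B := by
  intro φ hφ
  obtain ⟨gC, hgC⟩ := hC (p ∘ₗ φ) (by rw [LinearMap.comp_assoc, hφ, LinearMap.comp_zero])
  obtain ⟨gB, hgB⟩ := Module.projective_lifting_property p gC hp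
  obtain ⟨ψ, hψ⟩ := hexact.exists_comp_eq_of_comp_eq_zero hi (φ - gB ∘ₗ d₁) <| by
    rw [LinearMap.comp_sub, ← LinearMap.comp_assoc, hgB, hgC, sub_self]
  obtain ⟨gA, hgA⟩ := hA ψ <| by
    rw [← LinearMap.cancel_left hi, ← LinearMap.comp_assoc, hψ, LinearMap.sub_comp, hφ,
      LinearMap.comp_assoc, hd, LinearMap.comp_zero, LinearMap.comp_zero, sub_zero]
  refine ⟨i ∘ₗ gA + gB, ?_⟩
  rw [LinearMap.add_comp, LinearMap.comp_assoc, hgA, hψ, sub_add_cancel]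

lemma pi {ι : Type*} {M : ι → Type*} [∀ i, AddCommGroup (M i)] [∀ i, Module R (M i)]
    (hM : ∀ i, HomExactAtOne d₂ d₁ (M i)) : HomExactAtOne d₂ d₁ ((i : ι) → M i) := by
  intro φ hφ
  have hφi (i : ι) : (LinearMap.proj i ∘ₗ φ) ∘ₗ d₂ = 0 := by
    rw [LinearMap.comp_assoc, hφ, LinearMap.comp_zero]
  choose g hg using fun i => hM i _ (hφi i)
  refine ⟨LinearMap.pi g, ?_⟩
  ext x i
  exact LinearMap.congr_fun (hg i) x

end HomExactAtOne

end Linear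

namespace CategoryTheory.ProjectiveResolution

variable {R : Type u} [Ring R] {X : ModuleCat.{u} R} (P : ProjectiveResolution X)

lemma subsingleton_ext1_iff (M : Type u) [AddCommGroup M] [Module R M] :
    Subsingleton (ext1 R X (ModuleCat.of R M)) ↔
      HomExactAtOne (P.complex.d 2 1).hom (P.complex.d 1 0).hom M := by
  let C := P.complex.linearYonedaObj ℤ (ModuleCat.of R M)
  rw [Equiv.subsingleton_congr ((forget (ModuleCat ℤ)).mapIso (P.isoExt 1 _)).toEquiv,
    ← ModuleCat.isZero_iff_subsingleton, ← HomologicalComplex.exactAt_iff_isZero_homology,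
    C.exactAt_iff' 0 1 2 (by simp) (by simp), ShortComplex.moduleCat_exact_iff]
  constructor <;> intro h f hf
  · obtain ⟨g, hg⟩ := h (ModuleCat.ofHom f) (ModuleCat.hom_ext hf)
    exact ⟨g.hom, congrArg ModuleCat.Hom.hom hg⟩
  · obtain ⟨g, hg⟩ := h f.hom (congrArg ModuleCat.Hom.hom hf)
    exact ⟨ModuleCat.ofHom g, ModuleCat.hom_ext hg⟩

lemma eq_zero_of_comp_d_eq_zero {N : Type u} [AddCommGroup N] [Module R N]
    [Subsingleton (X →ₗ[R] N)] (g : P.complex.X 0 →ₗ[R] N)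
    (hg : g ∘ₗ (P.complex.d 1 0).hom = 0) : g = 0 := by
  obtain ⟨h, hh⟩ := CokernelCofork.IsColimit.desc' P.isColimitCokernelCofork (ModuleCat.ofHom g)
    (ModuleCat.hom_ext hg)
  rw [← ModuleCat.hom_ofHom g, ← hh, ModuleCat.hom_comp,
    Subsingleton.elim (α := X →ₗ[R] N) h.hom 0]
  exact LinearMap.zero_comp _

end CategoryTheory.ProjectiveResolution

namespace IsUContramodule

variable {R : Type u} [Ring R] {U : Type u} [AddCommGroup U] [Module R U]

lemma iff_homExactAtOne (P : ProjectiveResolution (ModuleCat.of R U)) (M : Type u)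
    [AddCommGroup M] [Module R M] :
    IsUContramodule R U M ↔ Subsingleton (U →ₗ[R] M) ∧
      HomExactAtOne (P.complex.d 2 1).hom (P.complex.d 1 0).hom M :=
  and_congr_right' (P.subsingleton_ext1_iff M)

lemma ker {M N : Type u} [AddCommGroup M] [AddCommGroup N] [Module R M] [Module R N]
    (f : M →ₗ[R] N) (hM : IsUContramodule R U M) (hN : Subsingleton (U →ₗ[R] N)) :
    IsUContramodule R U (LinearMap.ker f) := by
  obtain ⟨P⟩ : Nonempty (ProjectiveResolution (ModuleCat.of R U)) := HasProjectiveResolution.out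
  rw [iff_homExactAtOne P] at hM ⊢
  obtain ⟨_, hM⟩ := hM
  exact ⟨subsingleton_linearMap_of_injective (LinearMap.ker f).injective_subtype,
    hM.ker P.eq_zero_of_comp_d_eq_zero⟩

lemma of_exact {A B C : Type u} [AddCommGroup A] [AddCommGroup B] [AddCommGroup C]
    [Module R A] [Module R B] [Module R C] {i : A →ₗ[R] B} {p : B →ₗ[R] C}
    (hexact : Function.Exact i p) (hi : Function.Injective i) (hp : Function.Surjective p)
    (hA : IsUContramodule R U A) (hC : IsUContramodule R U C) : IsUContramodule R U B := by
  obtain ⟨P⟩ : Nonempty (ProjectiveResolution (ModuleCat.of R U)) := HasProjectiveResolution.out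
  rw [iff_homExactAtOne P] at hA hC ⊢
  obtain ⟨_, hA⟩ := hA
  obtain ⟨_, hC⟩ := hC
  exact ⟨subsingleton_linearMap_of_exact hexact hi,
    hA.of_exact (congrArg ModuleCat.Hom.hom (P.complex.d_comp_d 2 1 0)) hexact hi hp hC⟩

lemma pi {ι : Type u} {M : ι → Type u} [∀ i, AddCommGroup (M i)] [∀ i, Module R (M i)]
    (hM : ∀ i, IsUContramodule R U (M i)) : IsUContramodule R U ((i : ι) → M i) := by
  obtain ⟨P⟩ : Nonempty (ProjectiveResolution (ModuleCat.of R U)) := HasProjectiveResolution.out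
  simp only [iff_homExactAtOne P] at hM ⊢
  have := fun i => (hM i).1
  exact ⟨subsingleton_linearMap_pi, HomExactAtOne.pi fun i => (hM i).2⟩

end IsUContramodule

theorem stmt9_general {R : Type u} [Ring R] {U : Type u} [Ring U] (u : R →+* U)
    [Module R U] :
    (∀ (M N : Type u) (_ : AddCommGroup M) (_ : AddCommGroup N)
        (_ : Module R M) (_ : Module R N) (f : M →ₗ[R] N),
        IsUContramodule R U M → IsUContramodule R U N →
        IsUContramodule R U (LinearMap.ker f)) ∧
    (∀ (A B C : Type u) (_ : AddCommGroup A) (_ : AddCommGroup B) (_ : AddCommGroup C)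
        (_ : Module R A) (_ : Module R B) (_ : Module R C)
        (i : A →ₗ[R] B) (p : B →ₗ[R] C),
        Function.Injective i → Function.Surjective p →
        LinearMap.range i = LinearMap.ker p →
        IsUContramodule R U A → IsUContramodule R U C →
        IsUContramodule R U B) ∧
    (∀ (ι : Type u) (M : ι → Type u) (_ : ∀ i, AddCommGroup (M i))
        (_ : ∀ i, Module R (M i)),
        (∀ i, IsUContramodule R U (M i)) →
        IsUContramodule R U ((i : ι) → M i)) :=
  ⟨fun _ _ _ _ _ _ f hM hN => hM.ker f hN.1,
    fun _ _ _ _ _ _ _ _ _ _ _ hi hp hexact =>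
      IsUContramodule.of_exact (LinearMap.exact_iff.2 hexact.symm) hi hp,
    fun _ _ _ _ => IsUContramodule.pi⟩

/-- for a ring epimorphism `u : R → U`, the class of `u`-contramodules is
closed under kernels of morphisms, extensions, and arbitrary products. -/
theorem stmt9 {R : Type u} [Ring R] {U : Type u} [Ring U] (u : R →+* U)
    [Module R U] (hsmul : ∀ (r : R) (x : U), r • x = u r * x)
    (hepi : ∀ (T : Type u) [Ring T] (f g : U →+* T), f.comp u = g.comp u → f = g) :
    (∀ (M N : Type u) (_ : AddCommGroup M) (_ : AddCommGroup N)
        (_ : Module R M) (_ : Module R N) (f : M →ₗ[R] N),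
        IsUContramodule R U M → IsUContramodule R U N →
        IsUContramodule R U (LinearMap.ker f)) ∧
    (∀ (A B C : Type u) (_ : AddCommGroup A) (_ : AddCommGroup B) (_ : AddCommGroup C)
        (_ : Module R A) (_ : Module R B) (_ : Module R C)
        (i : A →ₗ[R] B) (p : B →ₗ[R] C),
        Function.Injective i → Function.Surjective p →
        LinearMap.range i = LinearMap.ker p →
        IsUContramodule R U A → IsUContramodule R U C →
        IsUContramodule R U B) ∧
    (∀ (ι : Type u) (M : ι → Type u) (_ : ∀ i, AddCommGroup (M i))
        (_ : ∀ i, Module R (M i)),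
        (∀ i, IsUContramodule R U (M i)) →
        IsUContramodule R U ((i : ι) → M i)) :=
  stmt9_general u

end
end

section
/- Let u: R → U be a ring epimorphism and M a u-contramodule. Then Hom_R(Z, M) = 0 = Ext^1_R(Z, M) for every R-module Z which admits a U-module structure. -/
universe u

noncomputable section

/-!
An `R`-linear map `f : W → M` out of a `U`-module vanishes: `f w` is the value at `1` of the
`R`-linear map `U → M`, `x ↦ f (x • w)`, and `Hom_R(U, M) = 0`.

`Ext¹_R(W, N) = 0` holds iff, for some (equivalently every) surjection `p : A → W`
from a projective module, every map `ker p → N` extends to `A`. Starting from the free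
presentation `(U →₀ R) → U`, this extension property passes to the direct sum
`Z →₀ (U →₀ R) → Z →₀ U`, and then to its composite with the `U`-linear surjection
`Z →₀ U → Z`: the kernel of the latter is a `U`-module, so it has no nonzero maps to `M` and the
extension obtained from the first step is already correct.
-/

open Function (Surjective)
open LinearMap (ker range)

section LinearAlgebra

variable {R : Type*} [Ring R] {A B C N : Type*} [AddCommGroup A] [Module R A]
  [AddCommGroup B] [Module R B] [AddCommGroup C] [Module R C] [AddCommGroup N] [Module R N]

def Submodule.HomsExtend (N : Type*) [AddCommGroup N] [Module R N] (K : Submodule R A) : Prop :=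
  Surjective fun g : A →ₗ[R] N ↦ g.domRestrict K

theorem LinearMap.exists_comp_eq_of_ker_le {τ : A →ₗ[R] B} (hτ : Surjective τ)
    {f : A →ₗ[R] N} (h : ker τ ≤ ker f) : ∃ θ : B →ₗ[R] N, θ ∘ₗ τ = f :=
  ⟨(ker τ).liftQ f h ∘ₗ (τ.quotKerEquivOfSurjective hτ).symm.toLinearMap, by
    ext x; simp [LinearMap.quotKerEquivOfSurjective_symm_apply]⟩

theorem Submodule.homsExtend_ker_iff_of_exact {X₂ : Type*} [AddCommGroup X₂] [Module R X₂]
    (d₂ : X₂ →ₗ[R] A) (d₁ : A →ₗ[R] B) (p : B →ₗ[R] C)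
    (h₂₁ : range d₂ = ker d₁) (h₁₀ : range d₁ = ker p) :
    (∀ f : A →ₗ[R] N, f ∘ₗ d₂ = 0 → ∃ g : B →ₗ[R] N, g ∘ₗ d₁ = f) ↔
      (ker p).HomsExtend N := by
  have hd₁ : ∀ a, d₁ a ∈ ker p := fun a ↦ h₁₀ ▸ LinearMap.mem_range_self d₁ a
  let τ := d₁.codRestrict _ hd₁
  have hτ : Surjective τ := by
    rintro ⟨b, hb⟩
    obtain ⟨a, rfl⟩ := (h₁₀ ▸ hb : b ∈ range d₁)
    exact ⟨a, rfl⟩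
  have hτd₂ : τ ∘ₗ d₂ = 0 := by
    ext x
    exact LinearMap.mem_ker.mp (h₂₁ ▸ LinearMap.mem_range_self d₂ x)
  have hker : ker τ = range d₂ := by
    rw [LinearMap.ker_codRestrict, h₂₁]
  constructor
  · intro hfac h
    obtain ⟨g, hg⟩ := hfac (h ∘ₗ τ) (by rw [LinearMap.comp_assoc, hτd₂, LinearMap.comp_zero])
    exact ⟨g, (LinearMap.cancel_right hτ).mp hg⟩
  · intro hext f hf
    obtain ⟨h, rfl⟩ := LinearMap.exists_comp_eq_of_ker_le hτ (f := f) (by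
      rw [hker, LinearMap.range_le_ker_iff]; exact hf)
    obtain ⟨g, rfl⟩ := hext h
    exact ⟨g, rfl⟩

theorem Submodule.HomsExtend.of_projective [Module.Projective R A] [Module.Projective R C]
    {p : A →ₗ[R] B} {q : C →ₗ[R] B} (hp : Surjective p) (hq : Surjective q)
    (h : (ker q).HomsExtend N) : (ker p).HomsExtend N := by
  obtain ⟨ψ, hψ⟩ := Module.projective_lifting_property q p hq
  obtain ⟨θ, hθ⟩ := Module.projective_lifting_property p q hp
  have hθker : ∀ c ∈ ker q, θ c ∈ ker p := fun c hc ↦ by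
    simpa [← hθ] using hc
  let π : A →ₗ[R] A := LinearMap.id - θ ∘ₗ ψ
  have hπ : ∀ a, π a ∈ ker p := fun a ↦ by
    rw [LinearMap.mem_ker, LinearMap.sub_apply, map_sub, LinearMap.comp_apply,
      ← LinearMap.comp_apply p θ, hθ, ← hψ, LinearMap.id_apply, LinearMap.comp_apply, sub_self]
  intro f
  obtain ⟨g, hg⟩ := h (f ∘ₗ θ.restrict hθker)
  refine ⟨g ∘ₗ ψ + f ∘ₗ π.codRestrict _ hπ, ?_⟩
  ext ⟨k, hk⟩
  have hψk : ψ k ∈ ker q := by simpa [← hψ] using hk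
  have hgk := LinearMap.congr_fun hg ⟨ψ k, hψk⟩
  simp only [LinearMap.domRestrict_apply, LinearMap.comp_apply, LinearMap.add_apply] at hgk ⊢
  rw [hgk, ← map_add]
  congr 1
  ext
  simp [π]

theorem Submodule.HomsExtend.finsupp {K : Submodule R A} (h : K.HomsExtend N) (ι : Type*) :
    (Finsupp.submodule fun _ : ι ↦ K).HomsExtend N := by
  have hrange : range (Finsupp.mapRange.linearMap (α := ι) K.subtype) =
      Finsupp.submodule fun _ ↦ K := by
    rw [Finsupp.range_mapRange_linearMap _ K.ker_subtype, K.range_subtype]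
  let e := (LinearEquiv.ofInjective _ (Finsupp.mapRange_injective _ rfl Subtype.val_injective)).trans
    (LinearEquiv.ofEq _ _ hrange)
  have he : ∀ x, (e x : ι →₀ A) = Finsupp.mapRange.linearMap K.subtype x := fun _ ↦ rfl
  intro f
  choose g hg using fun i ↦ h (f ∘ₗ e.toLinearMap ∘ₗ Finsupp.lsingle i)
  refine ⟨Finsupp.lsum ℕ g, (LinearMap.cancel_right e.surjective).mp ?_⟩
  refine Finsupp.lhom_ext fun i k ↦ ?_
  simpa [he] using LinearMap.congr_fun (hg i) k

theorem Submodule.HomsExtend.ker_comp {F F' : Type*} [AddCommGroup F] [Module R F]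
    [AddCommGroup F'] [Module R F'] {σ : A →ₗ[R] F} (hσ : Surjective σ)
    (h : (ker σ).HomsExtend N) (ε : F →ₗ[R] F')
    (hε : Subsingleton (ker ε →ₗ[R] N)) : (ker (ε ∘ₗ σ)).HomsExtend N := by
  intro f
  have hle : ker σ ≤ ker (ε ∘ₗ σ) := LinearMap.ker_le_ker_comp σ ε
  obtain ⟨g, hg⟩ := h (f ∘ₗ Submodule.inclusion hle)
  refine ⟨g, ?_⟩
  let τ := σ.restrict (p := ker (ε ∘ₗ σ)) (q := ker ε) fun _ hx ↦ hx
  have hτ : Surjective τ := by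
    rintro ⟨y, hy⟩
    obtain ⟨x, rfl⟩ := hσ y
    exact ⟨⟨x, hy⟩, rfl⟩
  obtain ⟨θ, hθ⟩ := LinearMap.exists_comp_eq_of_ker_le hτ (f := f - g.domRestrict _) <| by
    rintro ⟨x, hx⟩ hτx
    have hσx : x ∈ ker σ := congrArg Subtype.val hτx
    exact sub_eq_zero.mpr (LinearMap.congr_fun hg ⟨x, hσx⟩).symm
  rw [Subsingleton.elim θ 0, LinearMap.zero_comp] at hθ
  exact (sub_eq_zero.mp hθ.symm).symm

theorem subsingleton_linearMap_of_isScalarTower {U W : Type*} [Semiring U] [Module R U]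
    [IsScalarTower R U U] [AddCommGroup W] [Module U W] [Module R W] [IsScalarTower R U W]
    (hU : Subsingleton (U →ₗ[R] N)) : Subsingleton (W →ₗ[R] N) := by
  refine subsingleton_of_forall_eq 0 fun f ↦ LinearMap.ext fun w ↦ ?_
  simpa using LinearMap.congr_fun
    (Subsingleton.elim (f ∘ₗ (LinearMap.toSpanSingleton U W w).restrictScalars R) 0) 1

end LinearAlgebra

section Ext

open CategoryTheory

variable {R : Type u} [Ring R] {W N : Type u} [AddCommGroup W] [Module R W]
  [AddCommGroup N] [Module R N]

theorem CategoryTheory.ProjectiveResolution.subsingleton_ext1_iff_s10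
    (P : ProjectiveResolution (ModuleCat.of R W)) :
    Subsingleton (ext1 R (ModuleCat.of R W) (ModuleCat.of R N)) ↔
      ∀ f : P.complex.X 1 ⟶ ModuleCat.of R N, P.complex.d 2 1 ≫ f = 0 →
        ∃ g : P.complex.X 0 ⟶ ModuleCat.of R N, P.complex.d 1 0 ≫ g = f := by
  rw [← ModuleCat.isZero_iff_subsingleton, (P.isoExt 1 _).isZero_iff,
    ← HomologicalComplex.exactAt_iff_isZero_homology,
    HomologicalComplex.exactAt_iff' _ 0 1 2 (by simp) (by simp), ShortComplex.moduleCat_exact_iff]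
  rfl

theorem CategoryTheory.ProjectiveResolution.subsingleton_ext1_iff_homsExtend
    (P : ProjectiveResolution (ModuleCat.of R W)) :
    Subsingleton (ext1 R (ModuleCat.of R W) (ModuleCat.of R N)) ↔
      (ker (P.π.f 0).hom).HomsExtend N := by
  have h₁₀ : range (P.complex.d 1 0).hom = ker (P.π.f 0).hom :=
    (ShortComplex.moduleCat_exact_iff_range_eq_ker _).mp
      (ShortComplex.exact_of_g_is_cokernel
        (ShortComplex.mk _ _ P.complex_d_comp_π_f_zero) P.isColimitCokernelCofork)
  have h₂₁ : range (P.complex.d 2 1).hom = ker (P.complex.d 1 0).hom := by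
    have h := P.complex_exactAt_succ 0
    rw [HomologicalComplex.exactAt_iff' _ 2 1 0 (by simp) (by simp)] at h
    exact (ShortComplex.moduleCat_exact_iff_range_eq_ker _).mp h
  rw [P.subsingleton_ext1_iff_s10, ← Submodule.homsExtend_ker_iff_of_exact _ _ _ h₂₁ h₁₀]
  refine ModuleCat.homEquiv.forall_congr fun f ↦ ?_
  refine imp_congr ?_ (ModuleCat.homEquiv.exists_congr fun g ↦ ?_) <;>
    simp [ModuleCat.hom_ext_iff, ModuleCat.homEquiv]

theorem subsingleton_ext1_iff_homsExtend_ker {A : Type*} [AddCommGroup A] [Module R A]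
    [Module.Projective R A] {p : A →ₗ[R] W} (hp : Surjective p) :
    Subsingleton (ext1 R (ModuleCat.of R W) (ModuleCat.of R N)) ↔
      (ker p).HomsExtend N := by
  let P := ProjectiveResolution.of (ModuleCat.of R W)
  have : Module.Projective R (P.complex.X 0) :=
    (IsProjective.iff_projective _).mpr (P.projective 0)
  have hπ : Surjective (P.π.f 0).hom :=
    (ModuleCat.epi_iff_surjective _).mp inferInstance
  rw [P.subsingleton_ext1_iff_homsExtend]
  exact ⟨(·.of_projective hp hπ), (·.of_projective hπ hp)⟩

end Ext

theorem stmt10_general {R : Type u} [Ring R] {U : Type u} [Ring U] (u : R →+* U)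
    [Module R U] (hsmulU : ∀ (r : R) (x : U), r • x = u r * x)
    (M : Type u) [AddCommGroup M] [Module R M]
    (hM : Subsingleton (U →ₗ[R] M) ∧
      Subsingleton (ext1 R (ModuleCat.of R U) (ModuleCat.of R M)))
    (Z : Type u) [AddCommGroup Z] [Module U Z] [Module R Z]
    (hZ : ∀ (r : R) (z : Z), r • z = u r • z) :
    Subsingleton (Z →ₗ[R] M) ∧
      Subsingleton (ext1 R (ModuleCat.of R Z) (ModuleCat.of R M)) := by
  have : IsScalarTower R U U := ⟨fun r x y ↦ by simp only [hsmulU, smul_eq_mul, mul_assoc]⟩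
  have : IsScalarTower R U Z := ⟨fun r x z ↦ by rw [hsmulU, mul_smul, ← hZ]⟩
  obtain ⟨hHomU, hExtU⟩ := hM
  refine ⟨subsingleton_linearMap_of_isScalarTower hHomU, ?_⟩
  let q := Finsupp.linearCombination R (id : U → U)
  let σ : (Z →₀ (U →₀ R)) →ₗ[R] (Z →₀ U) := Finsupp.mapRange.linearMap q
  let ε := Finsupp.linearCombination U (id : Z → Z)
  have hq : Surjective q := Finsupp.linearCombination_id_surjective R U
  have hσ : Surjective σ := Finsupp.mapRange_surjective _ (map_zero q) hq
  have hε : Surjective (ε.restrictScalars R) := Finsupp.linearCombination_id_surjective U Z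
  have hεσ : Surjective (ε.restrictScalars R ∘ₗ σ) := hε.comp hσ
  rw [subsingleton_ext1_iff_homsExtend_ker (A := Z →₀ (U →₀ R)) hεσ]
  have hHomKer : Subsingleton (ker (ε.restrictScalars R) →ₗ[R] M) := by
    rw [LinearMap.ker_restrictScalars]
    exact subsingleton_linearMap_of_isScalarTower (W := (ker ε).restrictScalars R) hHomU
  refine .ker_comp hσ ?_ _ hHomKer
  rw [Finsupp.ker_mapRange]
  exact ((subsingleton_ext1_iff_homsExtend_ker hq).mp hExtU).finsupp Z

/-- let `u : R → U` be a ring epimorphism and `M` a `u`-contramodule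
(`Hom_R(U, M) = 0 = Ext¹_R(U, M)`). Then `Hom_R(Z, M) = 0 = Ext¹_R(Z, M)` for every
`R`-module `Z` whose `R`-action comes from a `U`-module structure via `u`. -/
theorem stmt10 {R : Type u} [Ring R] {U : Type u} [Ring U] (u : R →+* U)
    [Module R U] (hsmulU : ∀ (r : R) (x : U), r • x = u r * x)
    (hepi : ∀ (T : Type u) [Ring T] (f g : U →+* T), f.comp u = g.comp u → f = g)
    (M : Type u) [AddCommGroup M] [Module R M]
    (hM : Subsingleton (U →ₗ[R] M) ∧
      Subsingleton (ext1 R (ModuleCat.of R U) (ModuleCat.of R M)))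
    (Z : Type u) [AddCommGroup Z] [Module U Z] [Module R Z]
    (hZ : ∀ (r : R) (z : Z), r • z = u r • z) :
    Subsingleton (Z →ₗ[R] M) ∧
      Subsingleton (ext1 R (ModuleCat.of R Z) (ModuleCat.of R M)) :=
  stmt10_general u hsmulU M hM Z hZ
end
end
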